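/- Let y* ∈ [2,3], z₀ ∈ [0,1), and let (ρ, ω) be an inner LP-type solution on (z₀, 1]. Then for all z ∈ (z₀, 1): 0 < ρ(z) < 1/(y*·z), |ω(z)| < 1/(y*·z), and the function z ↦ z·ρ(z) has strictly positive derivative at z. -/

import Mathlib

/-- The rescaled self-similar isothermal Euler–Poisson system with parameter `y = y*`,
at the point `z`. -/
def EPSys (y : ℝ) (ρ ω : ℝ → ℝ) (z : ℝ) : Prop :=
  deriv ρ z =
    -(2 * y ^ 2 * z * ω z * ρ z * (ρ z - ω z)) / (1 - y ^ 2 * z ^ 2 * (ω z) ^ 2) ∧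
  deriv ω z =
    (1 - 3 * ω z) / z +
      2 * y ^ 2 * z * (ω z) ^ 2 * (ρ z - ω z) / (1 - y ^ 2 * z ^ 2 * (ω z) ^ 2)

/-- The multiplied form of the system, valid also at the sonic point. -/
def MultSys (y : ℝ) (ρ ω : ℝ → ℝ) (z : ℝ) : Prop :=
  deriv ρ z * (1 - y ^ 2 * z ^ 2 * (ω z) ^ 2)
    + 2 * y ^ 2 * z * ω z * ρ z * (ρ z - ω z) = 0 ∧
  z * deriv ω z * (1 - y ^ 2 * z ^ 2 * (ω z) ^ 2)
    - (1 - 3 * ω z) * (1 - y ^ 2 * z ^ 2 * (ω z) ^ 2)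
    - 2 * y ^ 2 * z ^ 2 * (ω z) ^ 2 * (ρ z - ω z) = 0

/-- An inner LP-type solution on `(z₀, 1]`: continuous on `(z₀,1]`, real analytic on a
left-neighbourhood of `z = 1` where it solves the multiplied system with the LP
conditions, differentiable on `(z₀,1)` where it solves the system, and subsonic there. -/
def InnerLPSol (y z₀ : ℝ) (ρ ω : ℝ → ℝ) : Prop :=
  ContinuousOn ρ (Set.Ioc z₀ 1) ∧ ContinuousOn ω (Set.Ioc z₀ 1) ∧
  (∃ r : ℝ, 0 < r ∧ r < 1 ∧
    AnalyticOnNhd ℝ ρ (Set.Ioc (1 - r) 1) ∧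
    AnalyticOnNhd ℝ ω (Set.Ioc (1 - r) 1) ∧
    (∀ z ∈ Set.Ioc (1 - r) 1, MultSys y ρ ω z)) ∧
  ρ 1 = 1 / y ∧ ω 1 = 1 / y ∧ deriv ρ 1 = -(1 / y) ∧ deriv ω 1 = 1 - 2 / y ∧
  (∀ z ∈ Set.Ioo z₀ 1,
    DifferentiableAt ℝ ρ z ∧ DifferentiableAt ℝ ω z ∧ EPSys y ρ ω z) ∧
  (∀ z ∈ Set.Ioo z₀ 1, 0 < 1 - y ^ 2 * z ^ 2 * (ω z) ^ 2)

/-!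
Along `(z₀, 1)` the `ρ`-equation is linear in `ρ`, `ρ' = a(z) ρ` with `a` continuous, so by
Grönwall `ρ` cannot vanish without vanishing identically up to `z = 1`, where `ρ = 1/y`; hence
`ρ > 0`. With `s = y z ω` and `b = y z ρ` one has `(z ρ)' = ρ ((s - b)² + 1 - b²) / (1 - s²)`,
which is positive as long as `b < 1`. At the sonic point `b(1) = 1` and `b'(1) = 0`, and twice
differentiating the multiplied equation at `z = 1` (legitimate by analyticity and the identity
theorem) gives `y (4y - 6) (z ρ)''(1) = -2 (y - 1)²`, so `b < 1` just left of `1` once `y > 3/2`.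
A continuity argument propagates `b < 1` to all of `(z₀, 1)`: on the right of the last point where
`b ≥ 1`, `z ρ` would be strictly increasing up to its value `1/y` at `z = 1`. The bound on `|ω|`
is the subsonic condition.
-/

open Set Filter Topology

theorem eventually_nhdsLT_lt_of_deriv_deriv_neg {f : ℝ → ℝ} {x₀ : ℝ}
    (hf : deriv (deriv f) x₀ < 0) (hd : deriv f x₀ = 0) (hc : ContinuousAt f x₀) :
    ∀ᶠ x in 𝓝[<] x₀, f x < f x₀ := by
  have hsign := eventually_nhdsWithin_sign_eq_of_deriv_neg hf hd
  obtain ⟨a, ha, hpos⟩ := mem_nhdsLT_iff_exists_Ioo_subset.mp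
    (deriv_pos_left_of_sign_deriv (nhdsWithin_le_nhds hsign))
  filter_upwards [Ioo_mem_nhdsLT ha] with x hx
  have hcont : ContinuousOn f (Icc x x₀) := by
    intro t ht
    rcases ht.2.lt_or_eq with htx | rfl
    · exact (differentiableAt_of_deriv_ne_zero
        (hpos ⟨hx.1.trans_le ht.1, htx⟩).ne').continuousAt.continuousWithinAt
    · exact hc.continuousWithinAt
  refine strictMonoOn_of_deriv_pos (convex_Icc x x₀) hcont (fun t ht => ?_)
    (left_mem_Icc.2 hx.2.le) (right_mem_Icc.2 hx.2.le) hx.2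
  rw [interior_Icc] at ht
  exact hpos ⟨hx.1.trans ht.1, ht.2⟩

theorem eq_zero_of_hasDerivWithinAt_smul_of_eq_zero {E : Type*} [NormedAddCommGroup E]
    [NormedSpace ℝ E] {f : ℝ → E} {g : ℝ → ℝ} {a b : ℝ} (hf : ContinuousOn f (Icc a b))
    (hg : ContinuousOn g (Icc a b))
    (hf' : ∀ x ∈ Ico a b, HasDerivWithinAt f (g x • f x) (Ici x) x) (ha : f a = 0) :
    ∀ x ∈ Icc a b, f x = 0 := by
  obtain ⟨K, hK⟩ := isCompact_Icc.exists_bound_of_continuousOn hg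
  refine eq_zero_of_abs_deriv_le_mul_abs_self_of_eq_zero_right (K := K) hf hf' ha fun x hx => ?_
  rw [norm_smul]
  exact mul_le_mul_of_nonneg_right (hK x (Ico_subset_Icc_self hx)) (norm_nonneg _)

theorem lt_of_deriv_pos_of_lt {g : ℝ → ℝ} {a b c : ℝ} (hg : ContinuousOn g (Ioc a b))
    (hb : g b ≤ c) (hnear : ∀ᶠ t in 𝓝[<] b, g t < c)
    (hderiv : ∀ t ∈ Ioo a b, g t < c → 0 < deriv g t) :
    ∀ t ∈ Ioo a b, g t < c := by
  intro t ht
  by_contra! hct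
  obtain ⟨d, hdb, hdc⟩ := mem_nhdsLT_iff_exists_Ioo_subset.mp hnear
  have htd : t ≤ d := not_lt.mp fun hdt => (hdc ⟨hdt, ht.2⟩ : g t < c).not_ge hct
  set A := Icc t d ∩ g ⁻¹' Ici c
  have hA : IsClosed A := (hg.mono fun s hs => ⟨ht.1.trans_le hs.1, hs.2.trans hdb.le⟩
    ).preimage_isClosed_of_isClosed isClosed_Icc isClosed_Ici
  have hAbdd : BddAbove A := ⟨d, fun s hs => hs.1.2⟩
  obtain ⟨⟨htm, hmd⟩, hcm⟩ : sSup A ∈ A := hA.csSup_mem ⟨t, ⟨le_rfl, htd⟩, hct⟩ hAbdd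
  set m := sSup A
  have hlt : ∀ s ∈ Ioo m b, g s < c := fun s hs => by
    by_cases hds : d < s
    · exact hdc ⟨hds, hs.2⟩
    · by_contra! hcs
      exact hs.1.not_ge (le_csSup hAbdd ⟨⟨htm.trans hs.1.le, not_lt.mp hds⟩, hcs⟩)
  have hmono : StrictMonoOn g (Icc m b) := by
    refine strictMonoOn_of_deriv_pos (convex_Icc m b)
      (hg.mono fun s hs => ⟨ht.1.trans_le (htm.trans hs.1), hs.2⟩) fun s hs => ?_
    rw [interior_Icc] at hs
    exact hderiv s ⟨ht.1.trans_le (htm.trans hs.1.le), hs.2⟩ (hlt s hs)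
  have hmb : m < b := hmd.trans_lt hdb
  exact (hmono (left_mem_Icc.2 hmb.le) (right_mem_Icc.2 hmb.le) hmb).not_ge (hb.trans hcm)

namespace InnerLPSol

variable {y z₀ : ℝ} {ρ ω : ℝ → ℝ}

theorem continuousOn_rho (h : InnerLPSol y z₀ ρ ω) : ContinuousOn ρ (Ioc z₀ 1) := h.1

theorem continuousOn_omega (h : InnerLPSol y z₀ ρ ω) : ContinuousOn ω (Ioc z₀ 1) := h.2.1

theorem rho_one (h : InnerLPSol y z₀ ρ ω) : ρ 1 = 1 / y := h.2.2.2.1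

theorem subsonic (h : InnerLPSol y z₀ ρ ω) :
    ∀ z ∈ Ioo z₀ 1, 0 < 1 - y ^ 2 * z ^ 2 * ω z ^ 2 :=
  h.2.2.2.2.2.2.2.2

theorem hasDerivAt_rho (h : InnerLPSol y z₀ ρ ω) {z : ℝ} (hz : z ∈ Ioo z₀ 1) :
    HasDerivAt ρ
      (-(2 * y ^ 2 * z * ω z * (ρ z - ω z)) / (1 - y ^ 2 * z ^ 2 * ω z ^ 2) * ρ z) z := by
  obtain ⟨-, -, -, -, -, -, -, hsys, -⟩ := h
  obtain ⟨hρd, -, hρ', -⟩ := hsys z hz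
  have hlin : deriv ρ z
      = -(2 * y ^ 2 * z * ω z * (ρ z - ω z)) / (1 - y ^ 2 * z ^ 2 * ω z ^ 2) * ρ z := by
    rw [hρ']; ring
  exact hlin ▸ hρd.hasDerivAt

theorem rho_ne_zero (h : InnerLPSol y z₀ ρ ω) (hy : y ≠ 0) : ∀ z ∈ Ioo z₀ 1, ρ z ≠ 0 := by
  intro z hz hρz
  have hρc := h.continuousOn_rho
  have hzero : EqOn ρ 0 (Ioo z 1) := fun b hb => by
    have hsub : Icc z b ⊆ Ioo z₀ 1 := fun t ht => ⟨hz.1.trans_le ht.1, ht.2.trans_lt hb.2⟩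
    refine eq_zero_of_hasDerivWithinAt_smul_of_eq_zero (hρc.mono (hsub.trans Ioo_subset_Ioc_self))
      ?_ (fun t ht => (h.hasDerivAt_rho (hsub (Ico_subset_Icc_self ht))).hasDerivWithinAt) hρz b
      (right_mem_Icc.2 hb.1.le)
    have hω : ContinuousOn ω (Icc z b) := h.continuousOn_omega.mono (hsub.trans Ioo_subset_Ioc_self)
    have hρ : ContinuousOn ρ (Icc z b) := hρc.mono (hsub.trans Ioo_subset_Ioc_self)
    exact ContinuousOn.div (by fun_prop) (by fun_prop) fun t ht => (h.subsonic t (hsub ht)).ne'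
  have hρ1 : ρ 1 = 0 := hzero.of_subset_closure (hρc.mono (Ioc_subset_Ioc_left hz.1.le))
    continuousOn_const Ioo_subset_Ioc_self
    (by rw [closure_Ioo hz.2.ne]; exact Ioc_subset_Icc_self) (right_mem_Ioc.2 hz.2)
  rw [h.rho_one] at hρ1
  exact one_div_ne_zero hy hρ1

theorem rho_pos (h : InnerLPSol y z₀ ρ ω) (hy : 0 < y) : ∀ z ∈ Ioo z₀ 1, 0 < ρ z := by
  intro z hz
  by_contra! hρz
  have hρ1 := h.rho_one
  obtain ⟨c, hc, hρc⟩ : 0 ∈ ρ '' Ioc z₀ 1 :=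
    isPreconnected_Ioc.intermediate_value (Ioo_subset_Ioc_self hz) (right_mem_Ioc.2 (hz.1.trans hz.2))
      h.continuousOn_rho ⟨hρz, by rw [hρ1]; positivity⟩
  rcases hc.2.lt_or_eq with hc1 | rfl
  · exact h.rho_ne_zero hy.ne' c ⟨hc.1, hc1⟩ hρc
  · rw [hρ1] at hρc
    exact one_div_ne_zero hy.ne' hρc

theorem deriv_mul_rho_pos (h : InnerLPSol y z₀ ρ ω) (hy : 0 < y) (hz₀ : 0 ≤ z₀) {z : ℝ}
    (hz : z ∈ Ioo z₀ 1) (hρ : 0 < ρ z) (hlt : z * ρ z < 1 / y) :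
    0 < deriv (fun t => t * ρ t) z := by
  obtain ⟨-, -, -, -, -, -, -, hsys, hsub⟩ := h
  obtain ⟨hρd, -, hρ', -⟩ := hsys z hz
  have hb : 0 < y * z * ρ z := by have := hz₀.trans_lt hz.1; positivity
  have hb1 : y * z * ρ z < 1 := by rwa [lt_div_iff₀ hy, mul_comm, ← mul_assoc] at hlt
  have hb2 : 0 < 1 - (y * z * ρ z) ^ 2 := by nlinarith
  have hD : 1 - y ^ 2 * z ^ 2 * ω z ^ 2 ≠ 0 := (hsub z hz).ne'
  have hderiv : deriv (fun t => t * ρ t) z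
      = ρ z * ((y * z * ω z - y * z * ρ z) ^ 2 + (1 - (y * z * ρ z) ^ 2))
        / (1 - y ^ 2 * z ^ 2 * ω z ^ 2) := by
    rw [((hasDerivAt_id' z).fun_mul hρd.hasDerivAt).deriv, hρ', eq_div_iff hD, add_mul,
      mul_assoc z, div_mul_cancel₀ _ hD]
    ring
  rw [hderiv]
  have := hsub z hz
  positivity

theorem analyticAt_one (h : InnerLPSol y z₀ ρ ω) : AnalyticAt ℝ ρ 1 ∧ AnalyticAt ℝ ω 1 := by
  obtain ⟨-, -, ⟨r, hr, -, hρ, hω, -⟩, -⟩ := h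
  have h1 : (1 : ℝ) ∈ Ioc (1 - r) 1 := ⟨by linarith, le_rfl⟩
  exact ⟨hρ 1 h1, hω 1 h1⟩

theorem multSys_fst_eventuallyEq_zero (h : InnerLPSol y z₀ ρ ω) :
    (fun z => deriv ρ z * (1 - y ^ 2 * z ^ 2 * ω z ^ 2) + 2 * y ^ 2 * z * ω z * ρ z * (ρ z - ω z))
      =ᶠ[𝓝 1] 0 := by
  obtain ⟨hρ, hω⟩ := h.analyticAt_one
  have hρ' := hρ.deriv
  obtain ⟨-, -, ⟨r, hr, -, -, -, hmult⟩, -⟩ := h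
  refine (AnalyticAt.frequently_zero_iff_eventually_zero (by fun_prop)).1 ?_
  refine (Eventually.frequently ?_).filter_mono (nhdsLT_le_nhdsNE 1)
  filter_upwards [Ioo_mem_nhdsLT (sub_lt_self 1 hr)] with z hz
  exact (hmult z (Ioo_subset_Ioc_self hz)).1

theorem iteratedDeriv_two_rho_one (h : InnerLPSol y z₀ ρ ω) (hy : y ≠ 0) :
    y * (4 * y - 6) * iteratedDeriv 2 ρ 1 = -2 * y ^ 2 + 12 * y - 14 := by
  obtain ⟨hρ, hω⟩ := h.analyticAt_one
  have hρn (n : ℕ) : ContDiffAt ℝ n ρ 1 := hρ.contDiffAt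
  have hωn (n : ℕ) : ContDiffAt ℝ n ω 1 := hω.contDiffAt
  have hdρn (n : ℕ) : ContDiffAt ℝ n (deriv ρ) 1 := hρ.deriv.contDiffAt
  have hG := h.multSys_fst_eventuallyEq_zero
  simp only [sq] at hG
  -- `ρ'''(1)` comes multiplied by `1 - y²ω(1)² = 0`, and the `ω''(1)` terms cancel by the LP
  -- conditions, so `hG` differentiated twice determines `ρ''(1)`.
  have key := hG.iteratedDeriv_eq 2
  simp (discharger := fun_prop) only [iteratedDeriv_fun_add, iteratedDeriv_fun_mul,
    Nat.reduceAdd, iteratedDeriv_fun_sub, iteratedDeriv_const,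
    iteratedDeriv_fun_id, mul_ite, mul_one, mul_zero, Finset.sum_range_succ, tsub_self,
    ↓reduceIte, Nat.choose_self, Nat.cast_one, one_mul, iteratedDeriv_zero, Finset.range_zero,
    zero_tsub, Finset.sum_empty, zero_add, Finset.range_one, Finset.sum_singleton,
    Nat.choose_zero_right, tsub_zero, OfNat.ofNat_ne_zero, Nat.choose_succ_self_right,
    Nat.cast_ofNat, iteratedDeriv_one, Nat.add_one_sub_one, one_ne_zero, OfNat.ofNat_ne_one,
    add_zero, zero_sub, neg_add_rev, deriv_const_mul_id', iteratedDeriv_const_zero] at key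
  have hdd : deriv (deriv ρ) 1 = iteratedDeriv 2 ρ 1 := by simp [iteratedDeriv_succ]
  obtain ⟨-, -, -, hρ1, hω1, hdρ1, hdω1, -⟩ := h
  rw [hρ1, hω1, hdρ1, hdω1, hdd] at key
  field_simp at key
  apply mul_left_cancel₀ (pow_ne_zero 2 hy)
  linear_combination -key

theorem eventually_mul_rho_lt (h : InnerLPSol y z₀ ρ ω) (hy : 3 / 2 < y) :
    ∀ᶠ t in 𝓝[<] 1, t * ρ t < 1 / y := by
  have hρ := h.analyticAt_one.1
  have hρn (n : ℕ) : ContDiffAt ℝ n ρ 1 := hρ.contDiffAt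
  have hρ'' := h.iteratedDeriv_two_rho_one (by positivity)
  obtain ⟨-, -, -, hρ1, -, hdρ1, -⟩ := h
  have hd : deriv (fun t => t * ρ t) 1 = 0 := by
    rw [((hasDerivAt_id' 1).fun_mul hρ.differentiableAt.hasDerivAt).deriv, hρ1, hdρ1]
    ring
  have hdd : deriv (deriv (fun t => t * ρ t)) 1 = iteratedDeriv 2 ρ 1 + 2 * deriv ρ 1 := by
    rw [← iteratedDeriv_one (f := fun t => t * ρ t), ← iteratedDeriv_succ]
    simp (discharger := fun_prop) [iteratedDeriv_fun_mul, Finset.sum_range_succ,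
      iteratedDeriv_fun_id]
  have hneg : deriv (deriv (fun t => t * ρ t)) 1 < 0 := by
    have hpos : 0 < y * (4 * y - 6) := by nlinarith
    refine neg_of_mul_neg_right (a := y * (4 * y - 6)) ?_ hpos.le
    rw [hdd, hdρ1, mul_add, hρ'']
    field_simp
    nlinarith
  simpa [hρ1] using eventually_nhdsLT_lt_of_deriv_deriv_neg hneg hd (by fun_prop)

theorem mul_rho_lt (h : InnerLPSol y z₀ ρ ω) (hy : 3 / 2 < y) (hz₀ : 0 ≤ z₀) :
    ∀ z ∈ Ioo z₀ 1, z * ρ z < 1 / y := by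
  have hy0 : 0 < y := by linarith
  refine lt_of_deriv_pos_of_lt (g := fun t => t * ρ t) (continuousOn_id.mul h.continuousOn_rho)
    (by rw [h.rho_one, one_mul]) (h.eventually_mul_rho_lt hy) fun z hz hlt => ?_
  exact h.deriv_mul_rho_pos hy0 hz₀ hz (h.rho_pos hy0 z hz) hlt

theorem abs_omega_lt (h : InnerLPSol y z₀ ρ ω) (hy : 0 < y) (hz₀ : 0 ≤ z₀) :
    ∀ z ∈ Ioo z₀ 1, |ω z| < 1 / (y * z) := by
  intro z hz
  have hyz : 0 < y * z := mul_pos hy (hz₀.trans_lt hz.1)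
  have hsq : (y * z * ω z) ^ 2 < 1 := by linarith [h.subsonic z hz]
  rw [lt_div_iff₀ hyz, mul_comm, ← abs_of_pos hyz, ← abs_mul]
  exact (sq_lt_one_iff_abs_lt_one _).1 hsq

end InnerLPSol

/-- A priori bounds for inner LP-type solutions. -/
theorem inner_apriori_bounds
    (y z₀ : ℝ) (hy : y ∈ Set.Icc (2 : ℝ) 3) (hz₀ : z₀ ∈ Set.Ico (0 : ℝ) 1)
    (ρ ω : ℝ → ℝ) (h : InnerLPSol y z₀ ρ ω) :
    ∀ z ∈ Set.Ioo z₀ 1,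
      0 < ρ z ∧ ρ z < 1 / (y * z) ∧
      |ω z| < 1 / (y * z) ∧
      0 < deriv (fun t => t * ρ t) z := by
  intro z hz
  have hy0 : 0 < y := by linarith [hy.1]
  have hρ := h.rho_pos hy0 z hz
  have hlt := h.mul_rho_lt (by linarith [hy.1]) hz₀.1 z hz
  refine ⟨hρ, ?_, h.abs_omega_lt hy0 hz₀.1 z hz, h.deriv_mul_rho_pos hy0 hz₀.1 hz hρ hlt⟩
  rwa [div_mul_eq_div_div, lt_div_iff₀ (hz₀.1.trans_lt hz.1), mul_comm]
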